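/- arXiv:2010.00304 — 3 statements merged into one kernel-verified Lean document; each statement's English description precedes it below -/
import Mathlib

section
/- Let Σ_k^{I,c} for k = 1..K, c = 1..C be symmetric positive definite n×n real matrices, and define Σ_k^L = ( (1/C) ∑_{c=1}^C (diag(σ(Σ_k^{I,c})))^{-1} )^{-1}, where diag(σ(M)) is the diagonal matrix of eigenvalues of M. If for every c, ∑_{k=1}^K tr(Σ_k^{I,c}) ≤ ∑_{k=1}^K tr(Σ_k^{0,c}) for given symmetric positive definite matrices Σ_k^{0,c}, then ∑_{k=1}^K tr((Σ_k^L)^{-1}) ≥ (n²K²/C) ∑_{c=1}^C ( ∑_{k=1}^K tr(Σ_k^{0,c}) )^{-1}. -/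
/-!
The averaged precision matrix `(Σ_k^L)⁻¹` is diagonal with entries `(1/C) ∑_c 1/λ_{k,c,i}`, so
the left-hand side is `(1/C) ∑_c ∑_{k,i} 1/λ_{k,c,i}`. For each `c`, the AM–HM (Cauchy–Schwarz)
inequality over the `nK` eigenvalues gives `(nK)² ≤ (∑_{k,i} λ_{k,c,i}) (∑_{k,i} 1/λ_{k,c,i})`,
and `∑_{k,i} λ_{k,c,i} = ∑_k tr Σ_k^{I,c} ≤ ∑_k tr Σ_k^{0,c}`.
-/

open scoped Matrix
open Finset

namespace Matrix

variable {ι m α : Type*} [DecidableEq m]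

lemma diagonal_finset_sum [AddCommMonoid α] (s : Finset ι) (v : ι → m → α) :
    diagonal (∑ c ∈ s, v c) = ∑ c ∈ s, diagonal (v c) :=
  map_sum (diagonalAddMonoidHom m α) v s

variable [Fintype m]

lemma inv_diagonal_of_ne_zero [Field α] {v : m → α} (hv : ∀ i, v i ≠ 0) :
    (diagonal v)⁻¹ = diagonal v⁻¹ := by
  refine inv_eq_left_inv ?_
  rw [diagonal_mul_diagonal, ← diagonal_one]
  exact congrArg diagonal (funext fun i => inv_mul_cancel₀ (hv i))

lemma inv_inv_diagonal_of_ne_zero [Field α] {v : m → α} (hv : ∀ i, v i ≠ 0) :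
    (diagonal v)⁻¹⁻¹ = diagonal v := by
  rw [inv_diagonal_of_ne_zero hv, inv_diagonal_of_ne_zero (v := v⁻¹) (fun i => inv_ne_zero (hv i)), inv_inv]

lemma smul_sum_inv_diagonal [Field α] (s : Finset ι) (a : α) {v : ι → m → α}
    (hv : ∀ c i, v c i ≠ 0) :
    a • ∑ c ∈ s, (diagonal (v c))⁻¹ = diagonal (a • ∑ c ∈ s, (v c)⁻¹) := by
  rw [diagonal_smul, diagonal_finset_sum]
  exact congrArg _ (sum_congr rfl fun c _ => inv_diagonal_of_ne_zero (hv c))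

lemma trace_inv_inv_smul_sum_inv_diagonal [Field α] [LinearOrder α] [IsStrictOrderedRing α]
    {s : Finset ι} (hs : s.Nonempty) {a : α} (ha : 0 < a) {v : ι → m → α}
    (hv : ∀ c i, 0 < v c i) :
    ((a • ∑ c ∈ s, (diagonal (v c))⁻¹)⁻¹⁻¹).trace = a * ∑ c ∈ s, ∑ i, (v c i)⁻¹ := by
  have hw : ∀ i, (a • ∑ c ∈ s, (v c)⁻¹) i ≠ 0 := fun i => by
    simp only [Pi.smul_apply, Finset.sum_apply, Pi.inv_apply, smul_eq_mul]
    exact (mul_pos ha (sum_pos (fun c _ => inv_pos.2 (hv c i)) hs)).ne'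
  rw [smul_sum_inv_diagonal s a (fun c i => (hv c i).ne'), inv_inv_diagonal_of_ne_zero hw,
    trace_diagonal, sum_comm]
  simp only [Pi.smul_apply, Finset.sum_apply, Pi.inv_apply, smul_eq_mul, mul_sum]

end Matrix

section HarmonicMean

variable {ι α : Type*} [Field α] [LinearOrder α] [IsStrictOrderedRing α]

lemma Finset.sq_card_le_sum_mul_sum_inv (s : Finset ι) {f : ι → α} (hf : ∀ i ∈ s, 0 < f i) :
    (#s : α) ^ 2 ≤ (∑ i ∈ s, f i) * ∑ i ∈ s, (f i)⁻¹ := by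
  simpa using sum_sq_le_sum_mul_sum_of_sq_le_mul s (r := fun _ => (1 : α))
    (fun i hi => (hf i hi).le) (fun i hi => (inv_pos.2 (hf i hi)).le)
    (fun i hi => by rw [one_pow, mul_inv_cancel₀ (hf i hi).ne'])

lemma Finset.sq_card_div_le_sum_inv (s : Finset ι) {f : ι → α} (hf : ∀ i ∈ s, 0 < f i)
    {T : α} (hT : ∑ i ∈ s, f i ≤ T) :
    (#s : α) ^ 2 / T ≤ ∑ i ∈ s, (f i)⁻¹ := by
  have hinv : 0 ≤ ∑ i ∈ s, (f i)⁻¹ := sum_nonneg fun i hi => (inv_pos.2 (hf i hi)).le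
  refine div_le_of_le_mul₀ ((sum_nonneg fun i hi => (hf i hi).le).trans hT) hinv ?_
  calc (#s : α) ^ 2 ≤ (∑ i ∈ s, f i) * ∑ i ∈ s, (f i)⁻¹ := s.sq_card_le_sum_mul_sum_inv hf
    _ ≤ T * ∑ i ∈ s, (f i)⁻¹ := mul_le_mul_of_nonneg_right hT hinv
    _ = (∑ i ∈ s, (f i)⁻¹) * T := mul_comm _ _

end HarmonicMean

theorem covariance_trace_bound_general (K C n : ℕ) (hC : 0 < C)
    (SI S0 : Fin K → Fin C → Matrix (Fin n) (Fin n) ℝ)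
    (hSI : ∀ k c, (SI k c).PosDef)
    (SL : Fin K → Matrix (Fin n) (Fin n) ℝ)
    (hSL : ∀ k, SL k =
      ((1 / (C : ℝ)) • ∑ c, (Matrix.diagonal ((hSI k c).1.eigenvalues))⁻¹)⁻¹)
    (htr : ∀ c, ∑ k, (SI k c).trace ≤ ∑ k, (S0 k c).trace) :
    ∑ k, ((SL k)⁻¹).trace ≥
      ((n : ℝ) ^ 2 * (K : ℝ) ^ 2 / (C : ℝ)) * ∑ c, (∑ k, (S0 k c).trace)⁻¹ := by
  set ev : Fin K → Fin C → Fin n → ℝ := fun k c => (hSI k c).1.eigenvalues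
  have hev : ∀ k c i, 0 < ev k c i := fun k c i => (hSI k c).eigenvalues_pos i
  have hLHS : ∀ k, ((SL k)⁻¹).trace = 1 / (C : ℝ) * ∑ c, ∑ i, (ev k c i)⁻¹ := fun k => by
    rw [hSL k]
    exact Matrix.trace_inv_inv_smul_sum_inv_diagonal (univ_nonempty_iff.2 ⟨⟨0, hC⟩⟩)
      (one_div_pos.2 (Nat.cast_pos.2 hC)) (hev k)
  have hAMHM : ∀ c, ((n : ℝ) * K) ^ 2 / ∑ k, (S0 k c).trace ≤ ∑ k, ∑ i, (ev k c i)⁻¹ :=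
    fun c => by
      have hsum : ∑ p : Fin K × Fin n, ev p.1 c p.2 ≤ ∑ k, (S0 k c).trace := by
        rw [Fintype.sum_prod_type]
        simpa only [(hSI _ c).1.trace_eq_sum_eigenvalues, RCLike.ofReal_real_eq_id, id] using htr c
      simpa [Fintype.sum_prod_type, mul_comm] using
        (univ : Finset (Fin K × Fin n)).sq_card_div_le_sum_inv (fun p _ => hev p.1 c p.2) hsum
  calc ((n : ℝ) ^ 2 * (K : ℝ) ^ 2 / (C : ℝ)) * ∑ c, (∑ k, (S0 k c).trace)⁻¹
      = 1 / (C : ℝ) * ∑ c, ((n : ℝ) * K) ^ 2 / ∑ k, (S0 k c).trace := by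
        simp only [mul_sum, div_eq_mul_inv]; ring_nf
    _ ≤ 1 / (C : ℝ) * ∑ c, ∑ k, ∑ i, (ev k c i)⁻¹ := by gcongr with c; exact hAMHM c
    _ = ∑ k, ((SL k)⁻¹).trace := by simp only [hLHS, ← mul_sum]; rw [sum_comm]

theorem covariance_trace_bound (K C n : ℕ) (hK : 0 < K) (hC : 0 < C) (hn : 0 < n)
    (SI S0 : Fin K → Fin C → Matrix (Fin n) (Fin n) ℝ)
    (hSI : ∀ k c, (SI k c).PosDef) (hS0 : ∀ k c, (S0 k c).PosDef)
    (SL : Fin K → Matrix (Fin n) (Fin n) ℝ)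
    (hSL : ∀ k, SL k =
      ((1 / (C : ℝ)) • ∑ c, (Matrix.diagonal ((hSI k c).1.eigenvalues))⁻¹)⁻¹)
    (htr : ∀ c, ∑ k, (SI k c).trace ≤ ∑ k, (S0 k c).trace) :
    ∑ k, ((SL k)⁻¹).trace ≥
      ((n : ℝ) ^ 2 * (K : ℝ) ^ 2 / (C : ℝ)) * ∑ c, (∑ k, (S0 k c).trace)⁻¹ :=
  covariance_trace_bound_general K C n hC SI S0 hSI SL hSL htr
end

section
/- Suppose that for each c = 1,...,C the initial covariances satisfy ∑_{k=1}^K tr(Σ_k^{0,c}) ≤ B for some bound B > 0. Then under the hypotheses of Theorem 1, ∑_{k=1}^K tr((Σ_k^L)^{-1}) ≥ n²K²/B. -/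
/-!
Each `(SL k)⁻¹` is the average over `c` of the diagonal matrices of inverse eigenvalues of
`SI k c`, so the total precision is the average over `c` of `∑_{k,i} 1 / λ_{k,c,i}`. For a fixed
`c` these `nK` eigenvalues sum to `∑_k tr (SI k c) ≤ B`, and the AM–HM inequality bounds the sum
of their inverses below by `(nK)² / B`.
-/

open scoped Matrix
open Finset Matrix

lemma Finset.card_sq_le_sum_mul_sum_inv {ι : Type*} (s : Finset ι) {f : ι → ℝ}
    (hf : ∀ i ∈ s, 0 < f i) :
    (#s : ℝ) ^ 2 ≤ (∑ i ∈ s, f i) * ∑ i ∈ s, (f i)⁻¹ := by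
  simpa using sum_sq_le_sum_mul_sum_of_sq_le_mul s (r := fun _ ↦ 1)
    (fun i hi ↦ (hf i hi).le) (fun i hi ↦ (inv_pos.2 (hf i hi)).le)
    (fun i hi ↦ by simp [mul_inv_cancel₀ (hf i hi).ne'])

lemma Finset.card_sq_div_le_sum_inv {ι : Type*} (s : Finset ι) {f : ι → ℝ}
    (hf : ∀ i ∈ s, 0 < f i) {B : ℝ} (hB : 0 < B) (hfB : ∑ i ∈ s, f i ≤ B) :
    (#s : ℝ) ^ 2 / B ≤ ∑ i ∈ s, (f i)⁻¹ := by
  rw [div_le_iff₀ hB, mul_comm]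
  calc (#s : ℝ) ^ 2 ≤ (∑ i ∈ s, f i) * ∑ i ∈ s, (f i)⁻¹ := card_sq_le_sum_mul_sum_inv s hf
    _ ≤ B * ∑ i ∈ s, (f i)⁻¹ := by
      gcongr
      exact sum_nonneg fun i hi ↦ (inv_pos.2 (hf i hi)).le

namespace Matrix

variable {m : Type*} [Fintype m] [DecidableEq m]

lemma trace_inv_diagonal {K : Type*} [Field K] {v : m → K} (hv : ∀ i, v i ≠ 0) :
    (diagonal v)⁻¹.trace = ∑ i, (v i)⁻¹ := by
  have : IsUnit v := Pi.isUnit_iff.2 fun i ↦ (hv i).isUnit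
  rw [inv_diagonal, trace_diagonal]
  simp [Ring.inverse_of_isUnit this]

lemma PosDef.nonsing_inv_nonsing_inv {K : Type*} [Field K] [PartialOrder K] [StarRing K]
    {A : Matrix m m K} (hA : A.PosDef) : A⁻¹⁻¹ = A :=
  _root_.Matrix.nonsing_inv_nonsing_inv A ((isUnit_iff_isUnit_det A).1 hA.isUnit)

lemma trace_inv_inv_smul_sum_inv {ι : Type*} [Fintype ι] [Nonempty ι] {D : ι → Matrix m m ℝ}
    (hD : ∀ c, (D c).PosDef) {a : ℝ} (ha : 0 < a) :
    ((a • ∑ c, (D c)⁻¹)⁻¹)⁻¹.trace = a * ∑ c, ((D c)⁻¹).trace := by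
  have hpos : (a • ∑ c, (D c)⁻¹).PosDef :=
    (posDef_sum univ_nonempty fun c _ ↦ (hD c).inv).smul ha
  rw [hpos.nonsing_inv_nonsing_inv, trace_smul, trace_sum, smul_eq_mul]

lemma PosDef.trace_inv_diagonal_eigenvalues {A : Matrix m m ℝ} (hA : A.PosDef) :
    (diagonal hA.1.eigenvalues)⁻¹.trace = ∑ i, (hA.1.eigenvalues i)⁻¹ :=
  trace_inv_diagonal fun i ↦ (hA.eigenvalues_pos i).ne'

end Matrix

theorem covariance_trace_bound_uniform_general (K C n : ℕ) (hC : 0 < C)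
    (SI S0 : Fin K → Fin C → Matrix (Fin n) (Fin n) ℝ)
    (hSI : ∀ k c, (SI k c).PosDef)
    (SL : Fin K → Matrix (Fin n) (Fin n) ℝ)
    (hSL : ∀ k, SL k =
      ((1 / (C : ℝ)) • ∑ c, (Matrix.diagonal ((hSI k c).1.eigenvalues))⁻¹)⁻¹)
    (htr : ∀ c, ∑ k, (SI k c).trace ≤ ∑ k, (S0 k c).trace)
    (B : ℝ) (hB : 0 < B) (hbound : ∀ c, ∑ k, (S0 k c).trace ≤ B) :
    ∑ k, ((SL k)⁻¹).trace ≥ (n : ℝ) ^ 2 * (K : ℝ) ^ 2 / B := by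
  have : NeZero C := ⟨hC.ne'⟩
  set ev := fun (k : Fin K) (c : Fin C) (i : Fin n) ↦ (hSI k c).1.eigenvalues i
  have hprecision : ∀ k, ((SL k)⁻¹).trace = (1 / (C : ℝ)) * ∑ c, ∑ i, (ev k c i)⁻¹ := by
    intro k
    rw [hSL k, trace_inv_inv_smul_sum_inv
      (fun c ↦ posDef_diagonal_iff.2 (hSI k c).eigenvalues_pos) (by positivity)]
    exact congrArg _ (sum_congr rfl fun c _ ↦ (hSI k c).trace_inv_diagonal_eigenvalues)
  have hcondition : ∀ c, (n : ℝ) ^ 2 * (K : ℝ) ^ 2 / B ≤ ∑ p : Fin K × Fin n, (ev p.1 c p.2)⁻¹ := by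
    intro c
    have := card_sq_div_le_sum_inv univ (f := fun p : Fin K × Fin n ↦ ev p.1 c p.2)
      (fun p _ ↦ (hSI p.1 c).eigenvalues_pos p.2) hB ?_
    · simpa [mul_pow, mul_comm] using this
    · rw [Fintype.sum_prod_type]
      refine le_of_eq_of_le (sum_congr rfl fun k _ ↦ ?_) ((htr c).trans (hbound c))
      simp [ev, (hSI k c).1.trace_eq_sum_eigenvalues]
  calc (n : ℝ) ^ 2 * (K : ℝ) ^ 2 / B
        = 1 / (C : ℝ) * ∑ _c : Fin C, (n : ℝ) ^ 2 * (K : ℝ) ^ 2 / B := by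
        rw [sum_const, card_univ, Fintype.card_fin, nsmul_eq_mul]
        field_simp
    _ ≤ 1 / (C : ℝ) * ∑ c, ∑ p : Fin K × Fin n, (ev p.1 c p.2)⁻¹ := by
        gcongr with c; exact hcondition c
    _ = ∑ k, ((SL k)⁻¹).trace := by
        simp_rw [hprecision, ← mul_sum, Fintype.sum_prod_type]
        rw [sum_comm]

theorem covariance_trace_bound_uniform (K C n : ℕ) (hK : 0 < K) (hC : 0 < C) (hn : 0 < n)
    (SI S0 : Fin K → Fin C → Matrix (Fin n) (Fin n) ℝ)
    (hSI : ∀ k c, (SI k c).PosDef) (hS0 : ∀ k c, (S0 k c).PosDef)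
    (SL : Fin K → Matrix (Fin n) (Fin n) ℝ)
    (hSL : ∀ k, SL k =
      ((1 / (C : ℝ)) • ∑ c, (Matrix.diagonal ((hSI k c).1.eigenvalues))⁻¹)⁻¹)
    (htr : ∀ c, ∑ k, (SI k c).trace ≤ ∑ k, (S0 k c).trace)
    (B : ℝ) (hB : 0 < B) (hbound : ∀ c, ∑ k, (S0 k c).trace ≤ B) :
    ∑ k, ((SL k)⁻¹).trace ≥ (n : ℝ) ^ 2 * (K : ℝ) ^ 2 / B :=
  covariance_trace_bound_uniform_general K C n hC SI S0 hSI SL hSL htr B hB hbound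
end

section
/- If σ^{i+1} = I_Σ σ^i with 0 ≤ I_Σ ≤ I symmetric, and Σ^i is the symmetric positive semidefinite matrix with vec((Σ^i)^{1/2}) = σ^i and Σ^i = ((Σ^i)^{1/2})ᵀ (Σ^i)^{1/2}, then tr(Σ^{i+1}) ≤ tr(Σ^i) for all i, i.e., the total variance is nonincreasing along EM covariance updates. -/
/-! Since `0 ≤ I_Σ ≤ 1`, also `I_Σ² ≤ 1`, so the update `σ ↦ I_Σ σ` does not increase the
Euclidean norm; and `tr Σ = ‖vec Σ^{1/2}‖²`. -/

open scoped Matrix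

namespace Matrix

variable {m n R : Type*}

/-- `A - A² = A (1 - A) Aᴴ + (1 - A) A (1 - A)ᴴ` exhibits `A - A²` as a sum of positive
semidefinite matrices. -/
theorem posSemidef_one_sub_mul_self [Fintype n] [DecidableEq n] [Ring R] [PartialOrder R]
    [StarRing R] [AddLeftMono R] {A : Matrix n n R} (hA : A.PosSemidef)
    (h1A : (1 - A).PosSemidef) : (1 - A * A).PosSemidef := by
  have hAH : Aᴴ = A := hA.isHermitian.eq
  have h1AH : (1 - A)ᴴ = 1 - A := h1A.isHermitian.eq
  have hdecomp : 1 - A * A = (1 - A) + (A * (1 - A) * Aᴴ + (1 - A) * A * (1 - A)ᴴ) := by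
    rw [hAH, h1AH]
    noncomm_ring
  rw [hdecomp]
  exact h1A.add ((h1A.mul_mul_conjTranspose_same A).add (hA.mul_mul_conjTranspose_same (1 - A)))

theorem star_mulVec_dotProduct_mulVec_le [Fintype n] [DecidableEq n] [CommRing R]
    [PartialOrder R] [StarRing R] [IsOrderedAddMonoid R] {A : Matrix n n R}
    (hA : (1 - Aᴴ * A).PosSemidef) (x : n → R) :
    star (A *ᵥ x) ⬝ᵥ (A *ᵥ x) ≤ star x ⬝ᵥ x := by
  have h := hA.dotProduct_mulVec_nonneg x
  rw [sub_mulVec, one_mulVec, dotProduct_sub, ← mulVec_mulVec, dotProduct_mulVec,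
    ← star_mulVec, sub_nonneg] at h
  exact h

theorem trace_transpose_mul_self [Fintype m] [Fintype n] [CommSemiring R] (A : Matrix m n R) :
    (Aᵀ * A).trace = vec Aᵀ ⬝ᵥ vec Aᵀ := by
  rw [vec_dotProduct_vec, transpose_transpose, trace_mul_comm]

end Matrix

theorem trace_nonincreasing_em_general (n : ℕ)
    (IS : Matrix (Fin n × Fin n) (Fin n × Fin n) ℝ)
    (hpos : IS.PosSemidef) (hle : (1 - IS).PosSemidef)
    (R : ℕ → Matrix (Fin n) (Fin n) ℝ)
    (S : ℕ → Matrix (Fin n) (Fin n) ℝ)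
    (hS : ∀ i, S i = (R i)ᵀ * R i)
    (hupd : ∀ i, (fun p : Fin n × Fin n => R (i + 1) p.1 p.2) =
      IS.mulVec (fun p : Fin n × Fin n => R i p.1 p.2)) :
    ∀ i, (S (i + 1)).trace ≤ (S i).trace := by
  have hcontr : (1 - ISᴴ * IS).PosSemidef := by
    rw [hpos.isHermitian.eq]
    exact Matrix.posSemidef_one_sub_mul_self hpos hle
  intro i
  -- `Matrix.vec` stacks columns, so the row-major flattening in `hupd` is `vec (R i)ᵀ`.
  have hvec : (R (i + 1))ᵀ.vec = IS *ᵥ (R i)ᵀ.vec := hupd i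
  simpa [hS, Matrix.trace_transpose_mul_self, hvec] using
    Matrix.star_mulVec_dotProduct_mulVec_le hcontr (R i)ᵀ.vec

theorem trace_nonincreasing_em (n : ℕ)
    (IS : Matrix (Fin n × Fin n) (Fin n × Fin n) ℝ)
    (hsymm : IS.IsSymm) (hpos : IS.PosSemidef) (hle : (1 - IS).PosSemidef)
    (R : ℕ → Matrix (Fin n) (Fin n) ℝ)
    (S : ℕ → Matrix (Fin n) (Fin n) ℝ)
    (hS : ∀ i, S i = (R i)ᵀ * R i)
    (hupd : ∀ i, (fun p : Fin n × Fin n => R (i + 1) p.1 p.2) =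
      IS.mulVec (fun p : Fin n × Fin n => R i p.1 p.2)) :
    ∀ i, (S (i + 1)).trace ≤ (S i).trace :=
  trace_nonincreasing_em_general n IS hpos hle R S hS hupd
end
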